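/- Let Γ be a countable group, Λ ≤ Γ a subgroup, and let Λ act on the coset space Γ/Λ by left multiplication. Suppose that there is no Λ-invariant mean on ℓ∞(Γ/Λ) vanishing on the indicator function of every finite subset of Γ/Λ (equivalently, no Λ-invariant probability measure on the Stone–Čech boundary ∂_β(Γ/Λ)). Then there exists a Λ-invariant mean on ℓ∞(Γ/Λ ∖ {eΛ}) if and only if some orbit Λ·(gΛ) with g ∉ Λ is finite. In particular, Λ has the spectral gap property in Γ if and only if every orbit Λ·(gΛ) with g ∉ Λ is infinite. -/

import Mathlib

/-! If all orbits of `Λ` on the non-trivial cosets are infinite, an invariant mean `m` on them gives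
every singleton the same mass as infinitely many others, hence mass zero; so `m` vanishes on finite
sets and, extended by zero at `eΛ`, it is a mean excluded by the hypothesis. Conversely, the uniform
average over a finite orbit `Λ·gΛ`, `g ∉ Λ`, is an invariant mean on the non-trivial cosets. -/

/-- A real-valued function on `X` is bounded. -/
def Bdd {X : Type*} (f : X → ℝ) : Prop := ∃ C : ℝ, ∀ x, |f x| ≤ C

/-- A mean on `ℓ∞(X)`: a positive normalized linear functional on the bounded
real-valued functions on `X` (its values on unbounded functions are irrelevant). -/
structure IsMean {X : Type*} (m : (X → ℝ) → ℝ) : Prop where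
  map_add : ∀ f g : X → ℝ, Bdd f → Bdd g → m (f + g) = m f + m g
  map_smul : ∀ (c : ℝ) (f : X → ℝ), Bdd f → m (c • f) = c * m f
  nonneg : ∀ f : X → ℝ, Bdd f → (∀ x, 0 ≤ f x) → 0 ≤ m f
  map_one : m (fun _ => (1 : ℝ)) = 1

/-- There exists a `Λ`-invariant mean on `ℓ∞(Γ/Λ ∖ {eΛ})`, where `Λ` acts on the coset
space `Γ/Λ` by left multiplication. -/
def ExistsInvariantMeanOnCosetsMinusBase {Γ : Type*} [Group Γ] (Λ : Subgroup Γ) : Prop :=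
  ∃ m : ({x : Γ ⧸ Λ // x ≠ ((1 : Γ) : Γ ⧸ Λ)} → ℝ) → ℝ, IsMean m ∧
    ∀ (γ : Λ) (f : {x : Γ ⧸ Λ // x ≠ ((1 : Γ) : Γ ⧸ Λ)} → ℝ), Bdd f →
      m (fun x => f ⟨(γ : Γ)⁻¹ • (x : Γ ⧸ Λ), by
        intro h
        apply x.2
        have hx : (x : Γ ⧸ Λ) = (γ : Γ) • ((γ : Γ)⁻¹ • (x : Γ ⧸ Λ)) :=
          (smul_inv_smul _ _).symm
        rw [hx, h, MulAction.Quotient.smul_coe]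
        simp [QuotientGroup.eq]⟩) = m f


open Finset MulAction

lemma Bdd.comp {X Y : Type*} {f : X → ℝ} (hf : Bdd f) (φ : Y → X) : Bdd (f ∘ φ) :=
  let ⟨C, hC⟩ := hf; ⟨C, fun y => hC (φ y)⟩

lemma bdd_indicator_one {X : Type*} (S : Set X) : Bdd (S.indicator fun _ => (1 : ℝ)) :=
  ⟨1, fun x => by by_cases hx : x ∈ S <;> simp [hx]⟩

namespace IsMean

variable {X : Type*} {m : (X → ℝ) → ℝ}

lemma map_zero (hm : IsMean m) : m (fun _ => 0) = 0 := by
  have h := hm.map_smul 0 (fun _ => 0) ⟨0, by simp⟩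
  rwa [zero_smul, zero_mul] at h

lemma mono (hm : IsMean m) {f g : X → ℝ} (hf : Bdd f) (hg : Bdd g) (hfg : f ≤ g) :
    m f ≤ m g := by
  obtain ⟨C, hC⟩ := hf
  obtain ⟨D, hD⟩ := hg
  have hbdd : Bdd (g - f) :=
    ⟨D + C, fun x => (abs_sub _ _).trans (add_le_add (hD x) (hC x))⟩
  have hadd := hm.map_add f (g - f) ⟨C, hC⟩ hbdd
  rw [add_sub_cancel] at hadd
  have := hm.nonneg (g - f) hbdd fun x => sub_nonneg.2 (hfg x)
  linarith

lemma map_indicator_finset (hm : IsMean m) (t : Finset X) :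
    m ((t : Set X).indicator fun _ => 1) = ∑ x ∈ t, m (({x} : Set X).indicator fun _ => 1) := by
  classical
  induction t using Finset.induction_on with
  | empty => simpa using hm.map_zero
  | insert a t ha ih =>
    have hsplit : ((insert a t : Finset X) : Set X).indicator (fun _ => (1 : ℝ)) =
        ({a} : Set X).indicator (fun _ => 1) + (t : Set X).indicator fun _ => 1 := by
      rw [coe_insert, Set.insert_eq, Set.indicator_union_of_disjoint (by simpa using ha)]
      rfl
    rw [hsplit, hm.map_add _ _ (bdd_indicator_one _) (bdd_indicator_one _), ih, sum_insert ha]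

/-- Any `n` points of `S` have total mass `n * m 1_{x} ≤ m 1 = 1`. -/
lemma map_indicator_singleton_eq_zero_of_infinite (hm : IsMean m) {x : X} {S : Set X}
    (hS : S.Infinite)
    (hSx : ∀ z ∈ S,
      m (({z} : Set X).indicator fun _ => 1) = m (({x} : Set X).indicator fun _ => 1)) :
    m (({x} : Set X).indicator fun _ => 1) = 0 := by
  set c := m (({x} : Set X).indicator fun _ => 1)
  have hc : 0 ≤ c := hm.nonneg _ (bdd_indicator_one _) fun _ => Set.indicator_nonneg (by simp) _
  have hnc : ∀ n : ℕ, n * c ≤ 1 := by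
    intro n
    obtain ⟨t, htS, rfl⟩ := hS.exists_subset_card_eq n
    calc (#t : ℝ) * c = ∑ z ∈ t, m (({z} : Set X).indicator fun _ => 1) := by
          rw [sum_congr rfl fun z hz => hSx z (htS hz), sum_const, nsmul_eq_mul]
      _ = m ((t : Set X).indicator fun _ => 1) := (hm.map_indicator_finset t).symm
      _ ≤ m fun _ => 1 :=
          hm.mono (bdd_indicator_one _) ⟨1, by simp⟩ (Set.indicator_le_self' (by simp))
      _ = 1 := hm.map_one
  by_contra hc0
  obtain ⟨n, hn⟩ := exists_nat_gt c⁻¹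
  have := (inv_lt_iff_one_lt_mul₀ (lt_of_le_of_ne hc (Ne.symm hc0))).1 hn
  linarith [hnc n]

lemma comp (hm : IsMean m) {Y : Type*} (φ : X → Y) :
    IsMean fun f : Y → ℝ => m (f ∘ φ) :=
  ⟨fun _ _ hf hg => hm.map_add _ _ (hf.comp φ) (hg.comp φ),
    fun c _ hf => hm.map_smul c _ (hf.comp φ),
    fun _ hf hf0 => hm.nonneg _ (hf.comp φ) fun x => hf0 (φ x), hm.map_one⟩

end IsMean

lemma isMean_average {X : Type*} {t : Finset X} (ht : t.Nonempty) :
    IsMean fun f : X → ℝ => (∑ x ∈ t, f x) / #t := by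
  have hcard : (0 : ℝ) < #t := by exact_mod_cast ht.card_pos
  refine ⟨fun f g _ _ => ?_, fun c f _ => ?_, fun f _ hf => ?_, ?_⟩
  · simp only [Pi.add_apply, sum_add_distrib, add_div]
  · simp only [Pi.smul_apply, smul_eq_mul, ← mul_sum, mul_div_assoc]
  · exact div_nonneg (sum_nonneg fun x _ => hf x) hcard.le
  · simp [hcard.ne']

def IsInvariantMean (G : Type*) {X : Type*} [Group G] [MulAction G X] (m : (X → ℝ) → ℝ) :
    Prop :=
  IsMean m ∧ ∀ (g : G) (f : X → ℝ), Bdd f → m (fun x => f (g⁻¹ • x)) = m f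

section GroupAction

variable {G X : Type*} [Group G] [MulAction G X]

def SubMulAction.complOfFixed {x₀ : X} (hx₀ : x₀ ∈ fixedPoints G X) : SubMulAction G X where
  carrier := {x₀}ᶜ
  smul_mem' g _ hx hgx := hx <| (eq_inv_smul_iff.2 hgx).trans (hx₀ g⁻¹)

lemma SubMulAction.finite_orbit_iff {p : SubMulAction G X} (x : p) :
    (orbit G x).Finite ↔ (orbit G (x : X)).Finite := by
  rw [← SubMulAction.val_image_orbit, Set.finite_image_iff Subtype.val_injective.injOn]

namespace IsInvariantMean

variable {m : (X → ℝ) → ℝ}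

lemma map_indicator_singleton_smul (hm : IsInvariantMean G m) (g : G) (x : X) :
    m (({g • x} : Set X).indicator fun _ => 1) = m (({x} : Set X).indicator fun _ => 1) := by
  rw [← hm.2 g _ (bdd_indicator_one {x})]
  congr 1
  funext y
  classical
  simp only [Set.indicator_apply, Set.mem_singleton_iff, inv_smul_eq_iff]

lemma map_indicator_singleton_eq_zero (hm : IsInvariantMean G m) {x : X}
    (hx : (orbit G x).Infinite) : m (({x} : Set X).indicator fun _ => 1) = 0 :=
  hm.1.map_indicator_singleton_eq_zero_of_infinite hx <| by
    rintro _ ⟨g, rfl⟩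
    exact hm.map_indicator_singleton_smul g x

lemma map_indicator_eq_zero_of_finite (hm : IsInvariantMean G m)
    (horb : ∀ x : X, (orbit G x).Infinite) {S : Set X} (hS : S.Finite) :
    m (S.indicator fun _ => 1) = 0 := by
  lift S to Finset X using hS
  rw [hm.1.map_indicator_finset,
    sum_eq_zero fun x _ => hm.map_indicator_singleton_eq_zero (horb x)]

lemma comp {Y : Type*} [MulAction G Y] (hm : IsInvariantMean G m) (φ : X →[G] Y) :
    IsInvariantMean G fun f : Y → ℝ => m (f ∘ φ) := by
  refine ⟨hm.1.comp φ, fun g f hf => ?_⟩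
  have := hm.2 g (f ∘ φ) (hf.comp φ)
  simp only [Function.comp_apply, map_smul] at this
  exact this

end IsInvariantMean

lemma isInvariantMean_average {t : Finset X} (ht : t.Nonempty)
    (hinv : ∀ g : G, ∀ x ∈ t, g • x ∈ t) :
    IsInvariantMean G fun f : X → ℝ => (∑ x ∈ t, f x) / #t := by
  refine ⟨isMean_average ht, fun g f _ => congrArg (· / (#t : ℝ)) ?_⟩
  refine sum_equiv (toPerm g⁻¹) (fun x => ⟨hinv g⁻¹ x, fun h => ?_⟩) fun _ _ => rfl
  simpa using hinv g _ h

lemma exists_isInvariantMean_of_finite_orbit {x : X} (hx : (orbit G x).Finite) :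
    ∃ m : (X → ℝ) → ℝ, IsInvariantMean G m :=
  ⟨_, isInvariantMean_average (t := hx.toFinset) ⟨x, by simp⟩
    fun g y hy => by simpa using mem_orbit_of_mem_orbit g (by simpa using hy)⟩

end GroupAction

section Cosets

variable {Γ : Type*} [Group Γ] (Λ : Subgroup Γ)

lemma QuotientGroup.mk_ne_mk_one_iff {g : Γ} : (g : Γ ⧸ Λ) ≠ ((1 : Γ) : Γ ⧸ Λ) ↔ g ∉ Λ := by
  simp [QuotientGroup.eq]

lemma QuotientGroup.mk_one_mem_fixedPoints : ((1 : Γ) : Γ ⧸ Λ) ∈ fixedPoints Λ (Γ ⧸ Λ) :=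
  fun γ => mem_stabilizer_iff.1 (by rw [stabilizer_quotient]; exact γ.2 :
    (γ : Γ) ∈ stabilizer Γ ((1 : Γ) : Γ ⧸ Λ))

abbrev cosetsMinusBase : SubMulAction Λ (Γ ⧸ Λ) :=
  SubMulAction.complOfFixed (QuotientGroup.mk_one_mem_fixedPoints Λ)

lemma existsInvariantMeanOnCosetsMinusBase_iff :
    ExistsInvariantMeanOnCosetsMinusBase Λ ↔
      ∃ m : (cosetsMinusBase Λ → ℝ) → ℝ, IsInvariantMean Λ m :=
  Iff.rfl

lemma existsInvariantMeanOnCosetsMinusBase_of_finite_orbit {g : Γ} (hg : g ∉ Λ)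
    (hfin : (orbit Λ (g : Γ ⧸ Λ)).Finite) : ExistsInvariantMeanOnCosetsMinusBase Λ :=
  (existsInvariantMeanOnCosetsMinusBase_iff Λ).2 <|
    exists_isInvariantMean_of_finite_orbit (x := ⟨g, (QuotientGroup.mk_ne_mk_one_iff Λ).2 hg⟩)
      ((SubMulAction.finite_orbit_iff _).2 hfin)

lemma exists_invariantMean_vanishing_on_finite_of_infinite_orbits
    (hE : ExistsInvariantMeanOnCosetsMinusBase Λ)
    (hinf : ∀ g : Γ, g ∉ Λ → (orbit Λ (g : Γ ⧸ Λ)).Infinite) :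
    ∃ m : ((Γ ⧸ Λ) → ℝ) → ℝ, IsInvariantMean Λ m ∧
      ∀ S : Set (Γ ⧸ Λ), S.Finite → m (S.indicator fun _ => 1) = 0 := by
  obtain ⟨m, hm⟩ := (existsInvariantMeanOnCosetsMinusBase_iff Λ).1 hE
  have horb : ∀ x : cosetsMinusBase Λ, (orbit Λ x).Infinite := by
    rintro ⟨x, hx⟩
    obtain ⟨g, rfl⟩ := QuotientGroup.mk_surjective x
    exact mt (SubMulAction.finite_orbit_iff _).1 <|
      hinf g ((QuotientGroup.mk_ne_mk_one_iff Λ).1 hx)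
  refine ⟨_, hm.comp (SubMulAction.inclusion _), fun S hS => ?_⟩
  exact hm.map_indicator_eq_zero_of_finite horb (hS.preimage Subtype.val_injective.injOn)

end Cosets

theorem spectral_gap_iff_infinite_orbits_general {Γ : Type*} [Group Γ]
    (Λ : Subgroup Γ)
    (hno : ¬ ∃ m : ((Γ ⧸ Λ) → ℝ) → ℝ, IsMean m ∧
      (∀ (γ : Λ) (f : (Γ ⧸ Λ) → ℝ), Bdd f → m (fun x => f ((γ : Γ)⁻¹ • x)) = m f) ∧
      (∀ S : Set (Γ ⧸ Λ), S.Finite → m (Set.indicator S (fun _ => (1 : ℝ))) = 0)) :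
    (ExistsInvariantMeanOnCosetsMinusBase Λ ↔
      ∃ g : Γ, g ∉ Λ ∧ (MulAction.orbit Λ ((g : Γ ⧸ Λ))).Finite) ∧
    (¬ ExistsInvariantMeanOnCosetsMinusBase Λ ↔
      ∀ g : Γ, g ∉ Λ → (MulAction.orbit Λ ((g : Γ ⧸ Λ))).Infinite) := by
  have key : ExistsInvariantMeanOnCosetsMinusBase Λ ↔
      ∃ g : Γ, g ∉ Λ ∧ (orbit Λ (g : Γ ⧸ Λ)).Finite := by
    refine ⟨fun hE => ?_, fun ⟨g, hg, hfin⟩ =>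
      existsInvariantMeanOnCosetsMinusBase_of_finite_orbit Λ hg hfin⟩
    by_contra! hinf
    obtain ⟨m, ⟨hmean, hinv⟩, hvanish⟩ :=
      exists_invariantMean_vanishing_on_finite_of_infinite_orbits Λ hE hinf
    exact hno ⟨m, hmean, hinv, hvanish⟩
  exact ⟨key, by simp only [key, not_exists, not_and]; rfl⟩

/-- If there is no `Λ`-invariant mean on `ℓ∞(Γ/Λ)` vanishing on indicators of finite
sets (no `Λ`-invariant measure on `∂_β(Γ/Λ)`), then: a `Λ`-invariant mean on
`ℓ∞(Γ/Λ ∖ {eΛ})` exists iff some orbit `Λ·(gΛ)`, `g ∉ Λ`, is finite; in particular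
`Λ` has spectral gap in `Γ` iff every orbit `Λ·(gΛ)`, `g ∉ Λ`, is infinite. -/
theorem spectral_gap_iff_infinite_orbits {Γ : Type*} [Group Γ] [Countable Γ]
    (Λ : Subgroup Γ)
    (hno : ¬ ∃ m : ((Γ ⧸ Λ) → ℝ) → ℝ, IsMean m ∧
      (∀ (γ : Λ) (f : (Γ ⧸ Λ) → ℝ), Bdd f → m (fun x => f ((γ : Γ)⁻¹ • x)) = m f) ∧
      (∀ S : Set (Γ ⧸ Λ), S.Finite → m (Set.indicator S (fun _ => (1 : ℝ))) = 0)) :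
    (ExistsInvariantMeanOnCosetsMinusBase Λ ↔
      ∃ g : Γ, g ∉ Λ ∧ (MulAction.orbit Λ ((g : Γ ⧸ Λ))).Finite) ∧
    (¬ ExistsInvariantMeanOnCosetsMinusBase Λ ↔
      ∀ g : Γ, g ∉ Λ → (MulAction.orbit Λ ((g : Γ ⧸ Λ))).Infinite) :=
  spectral_gap_iff_infinite_orbits_general Λ hno
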